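/- For the tamed scheme applied to the n-layer neural network: if r ≥ (n+2)/2 and λ ∈ (0,1] is small enough, then the tamed updating function H(θ, y) = ∇_θ U(θ, y) / (1 + √λ |θ|^{2r}), where U(θ, y) = |h(z,θ) − l|² + (η/(2(r+1)))|θ|^{2(r+1)}, satisfies the dissipativity condition ⟨H(θ, y), θ⟩ ≥ (η/2)|θ|² − K'(1 + |y|²) for all θ ∈ ℝ^d and y ∈ ℝ^m, for some constant K' > 0; i.e., Assumption 1 holds with Δ = η/2 and b(y) quadratic in y. -/

import Mathlib

open scoped RealInnerProductSpace

/-- The index set of the parameter θ = (W₁, …, W_n) of an n-layer network with layer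
dimensions dims 0, dims 1, …, dims n : the weight matrix Wᵢ₊₁ ∈ ℝ^{dims (i+1) × dims i}
is indexed by the fiber over i : Fin n. -/
abbrev NetIdx (n : ℕ) (dims : ℕ → ℕ) : Type :=
  (i : Fin n) × (Fin (dims (i.1 + 1)) × Fin (dims i.1))

/-- The forward pass through the first k layers of the network:
a_0 = z, a_{k+1} = s_{k+1}(W_{k+1} a_k). -/
noncomputable def mlForward (n : ℕ) (dims : ℕ → ℕ) (sact : ℕ → ℝ → ℝ)
    (θ : EuclideanSpace ℝ (NetIdx n dims)) (z : EuclideanSpace ℝ (Fin (dims 0))) :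
    (k : ℕ) → Fin (dims k) → ℝ
  | 0 => z
  | (k + 1) => fun j =>
      if hk : k < n then
        sact (k + 1) (∑ i : Fin (dims k), θ ⟨⟨k, hk⟩, (j, i)⟩ * mlForward n dims sact θ z k i)
      else 0

/-- The n-layer network prediction h(z, θ) = s_n(W_n s_{n-1}(⋯ s_1(W_1 z))). -/
noncomputable def mlNet (n : ℕ) (dims : ℕ → ℕ) (sact : ℕ → ℝ → ℝ)
    (θ : EuclideanSpace ℝ (NetIdx n dims)) (z : EuclideanSpace ℝ (Fin (dims 0))) :
    EuclideanSpace ℝ (Fin (dims n)) :=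
  WithLp.toLp 2 (fun j => mlForward n dims sact θ z n j)

/-- The squared loss |h(z,θ) − l|² of the n-layer network, as a function of θ, with
the data point y = (z, l) given in concatenated form. -/
noncomputable def mlLabel (n : ℕ) (dims : ℕ → ℕ)
    (y : EuclideanSpace ℝ (Fin (dims 0) ⊕ Fin (dims n))) :
    EuclideanSpace ℝ (Fin (dims n)) :=
  WithLp.toLp 2 (fun j => y (Sum.inr j))

noncomputable def mlLoss (n : ℕ) (dims : ℕ → ℕ) (sact : ℕ → ℝ → ℝ)
    (y : EuclideanSpace ℝ (Fin (dims 0) ⊕ Fin (dims n)))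
    (θ : EuclideanSpace ℝ (NetIdx n dims)) : ℝ :=
  ‖mlNet n dims sact θ (WithLp.toLp 2 (fun i => y (Sum.inl i))) - mlLabel n dims y‖ ^ 2


/-- The regularized loss U(θ, y) = |h(z,θ) − l|² + (η/(2(r+1)))|θ|^{2(r+1)}. -/
noncomputable def mlRegLoss (n : ℕ) (dims : ℕ → ℕ) (sact : ℕ → ℝ → ℝ) (η r : ℝ)
    (y : EuclideanSpace ℝ (Fin (dims 0) ⊕ Fin (dims n)))
    (θ : EuclideanSpace ℝ (NetIdx n dims)) : ℝ :=
  mlLoss n dims sact y θ + (η / (2 * (r + 1))) * ‖θ‖ ^ (2 * (r + 1))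

/-- The tamed updating function H(θ, y) = ∇_θ U(θ, y) / (1 + √λ |θ|^{2r}). -/
noncomputable def tamedH (n : ℕ) (dims : ℕ → ℕ) (sact : ℕ → ℝ → ℝ) (η r lam : ℝ)
    (θ : EuclideanSpace ℝ (NetIdx n dims))
    (y : EuclideanSpace ℝ (Fin (dims 0) ⊕ Fin (dims n))) :
    EuclideanSpace ℝ (NetIdx n dims) :=
  (1 + Real.sqrt lam * ‖θ‖ ^ (2 * r))⁻¹ • gradient (mlRegLoss n dims sact η r y) θ

/- Proof idea. By Cauchy–Schwarz and the known gradient bound, the loss part of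
⟨∇U(θ,y), θ⟩ is at least −C(1+|y|)²(|θ| + |θ|^{n+2}), and since n + 2 ≤ 2r this is at least
−4C(1+|y|²)(1+|θ|^{2r}). The regularizer contributes η|θ|^{2r}|θ|², half of which beats
(η/2)|θ|²·√λ|θ|^{2r} and the other half (η/2)|θ|² up to the constant η/2. Dividing by
the taming factor 1 + √λ|θ|^{2r} ≥ √λ(1 + |θ|^{2r}) then gives the claim with any λ ≤ 1 and
K' = 4C/√λ + η/2. -/

section Gradient

variable {E : Type*} [NormedAddCommGroup E] [InnerProductSpace ℝ E] [CompleteSpace E]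
  {f g : E → ℝ} {f' g' x : E}

theorem HasGradientAt.add (hf : HasGradientAt f f' x) (hg : HasGradientAt g g' x) :
    HasGradientAt (fun x => f x + g x) (f' + g') x := by
  rw [hasGradientAt_iff_hasFDerivAt] at *
  simpa only [map_add] using hf.fun_add hg

theorem HasGradientAt.const_mul (c : ℝ) (hf : HasGradientAt f f' x) :
    HasGradientAt (fun x => c * f x) (c • f') x := by
  rw [hasGradientAt_iff_hasFDerivAt] at *
  simpa only [map_smul] using hf.const_mul c

theorem hasGradientAt_norm_rpow (x : E) {p : ℝ} (hp : 1 < p) :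
    HasGradientAt (fun x : E => ‖x‖ ^ p) ((p * ‖x‖ ^ (p - 2)) • x) x := by
  rw [hasGradientAt_iff_hasFDerivAt, map_smul]
  exact hasFDerivAt_norm_rpow x hp

theorem gradient_add_norm_rpow_regularizer (hf : DifferentiableAt ℝ f x) (η : ℝ) {r : ℝ}
    (hr : 0 ≤ r) :
    gradient (fun θ => f θ + η / (2 * (r + 1)) * ‖θ‖ ^ (2 * (r + 1))) x
      = gradient f x + (η * ‖x‖ ^ (2 * r)) • x := by
  have hreg := (hasGradientAt_norm_rpow x (p := 2 * (r + 1)) (by linarith)).const_mul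
    (η / (2 * (r + 1)))
  rw [(hf.hasGradientAt.add hreg).gradient, smul_smul]
  congr 2
  rw [show 2 * (r + 1) - 2 = 2 * r by ring]
  field_simp

end Gradient

theorem mlForward_differentiable (n : ℕ) (dims : ℕ → ℕ) (sact : ℕ → ℝ → ℝ)
    (hsdiff : ∀ i, 1 ≤ i → i ≤ n → ContDiff ℝ 1 (sact i))
    (z : EuclideanSpace ℝ (Fin (dims 0))) {k : ℕ} (hk : k ≤ n) (j : Fin (dims k)) :
    Differentiable ℝ fun θ : EuclideanSpace ℝ (NetIdx n dims) =>
      mlForward n dims sact θ z k j := by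
  induction k with
  | zero => simp only [mlForward]; exact differentiable_const _
  | succ k ih =>
    have hkn : k < n := hk
    simp only [mlForward, hkn, dite_true]
    have hs : Differentiable ℝ (sact (k + 1)) :=
      (hsdiff (k + 1) (Nat.le_add_left 1 k) hk).differentiable one_ne_zero
    exact hs.comp (Differentiable.fun_sum fun i _ =>
      (EuclideanSpace.proj (𝕜 := ℝ) (⟨⟨k, hkn⟩, (j, i)⟩ : NetIdx n dims)).differentiable.mul
        (ih hkn.le i))

theorem mlLoss_differentiable (n : ℕ) (dims : ℕ → ℕ) (sact : ℕ → ℝ → ℝ)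
    (hsdiff : ∀ i, 1 ≤ i → i ≤ n → ContDiff ℝ 1 (sact i))
    (y : EuclideanSpace ℝ (Fin (dims 0) ⊕ Fin (dims n))) :
    Differentiable ℝ (mlLoss n dims sact y) := by
  have hnet : Differentiable ℝ fun θ =>
      mlNet n dims sact θ (WithLp.toLp 2 (fun i => y (Sum.inl i))) :=
    (differentiable_piLp 2).2 fun j => mlForward_differentiable n dims sact hsdiff _ le_rfl j
  exact (hnet.sub_const _).norm_sq ℝ

theorem inner_tamedH_self (n : ℕ) (dims : ℕ → ℕ) (sact : ℕ → ℝ → ℝ)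
    (hsdiff : ∀ i, 1 ≤ i → i ≤ n → ContDiff ℝ 1 (sact i)) (η : ℝ) {r : ℝ} (hr : 0 ≤ r)
    (lam : ℝ) (θ : EuclideanSpace ℝ (NetIdx n dims))
    (y : EuclideanSpace ℝ (Fin (dims 0) ⊕ Fin (dims n))) :
    ⟪tamedH n dims sact η r lam θ y, θ⟫
      = (⟪gradient (mlLoss n dims sact y) θ, θ⟫ + η * ‖θ‖ ^ (2 * r) * ‖θ‖ ^ 2)
        / (1 + Real.sqrt lam * ‖θ‖ ^ (2 * r)) := by
  have hgrad : gradient (mlRegLoss n dims sact η r y) θ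
      = gradient (mlLoss n dims sact y) θ + (η * ‖θ‖ ^ (2 * r)) • θ :=
    gradient_add_norm_rpow_regularizer (mlLoss_differentiable n dims sact hsdiff y θ) η hr
  rw [tamedH, hgrad, real_inner_smul_left, inner_add_left, real_inner_smul_left,
    real_inner_self_eq_norm_sq, inv_mul_eq_div]

theorem rpow_le_one_add_rpow {ρ a b : ℝ} (hρ : 0 ≤ ρ) (ha : 0 ≤ a) (hab : a ≤ b) :
    ρ ^ a ≤ 1 + ρ ^ b := by
  rcases le_or_gt ρ 1 with h | h
  · linarith [Real.rpow_le_one hρ h ha, Real.rpow_nonneg hρ b]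
  · linarith [Real.rpow_le_rpow_of_exponent_le h.le hab, Real.rpow_nonneg hρ a]

theorem one_add_pow_succ_mul_le {ρ q : ℝ} {N : ℕ} (hρ : 0 ≤ ρ) (hq : (N : ℝ) + 2 ≤ q) :
    (1 + ρ ^ (N + 1)) * ρ ≤ 2 * (1 + ρ ^ q) := by
  have hlin : ρ ≤ 1 + ρ ^ q := by
    simpa only [Real.rpow_one] using
      rpow_le_one_add_rpow hρ zero_le_one (by linarith [N.cast_nonneg (α := ℝ)])
  have hpow : ρ ^ (N + 1) * ρ ≤ 1 + ρ ^ q := by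
    rw [← pow_succ, ← Real.rpow_natCast]
    exact rpow_le_one_add_rpow hρ (Nat.cast_nonneg _) (by push_cast; linarith)
  linarith

theorem sq_le_one_add_rpow_mul_sq {ρ t : ℝ} (hρ : 0 ≤ ρ) (ht : 0 ≤ t) :
    ρ ^ 2 ≤ 1 + ρ ^ t * ρ ^ 2 := by
  have h := rpow_le_one_add_rpow hρ (a := 2) (b := t + 2) zero_le_two (by linarith)
  rwa [Real.rpow_add' hρ (by linarith), Real.rpow_two] at h

theorem tamed_scalar_dissipativity {C η s w ρ P Q G : ℝ} (hC : 0 ≤ C) (hη : 0 < η)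
    (hs0 : 0 < s) (hs1 : s ≤ 1) (hP : 0 ≤ P)
    (hG : -(C * (1 + w) ^ 2 * Q) ≤ G) (hQ : Q ≤ 2 * (1 + P)) (hρ : ρ ^ 2 ≤ 1 + P * ρ ^ 2) :
    (η / 2) * ρ ^ 2 - (4 * C / s + η / 2) * (1 + w ^ 2) ≤ (G + η * P * ρ ^ 2) / (1 + s * P) := by
  rw [le_div_iff₀ (by positivity)]
  have hw : (1 + w) ^ 2 ≤ 2 * (1 + w ^ 2) := by nlinarith [sq_nonneg (1 - w)]
  have hloss : -(4 * C / s * (1 + w ^ 2) * (1 + s * P)) ≤ G := by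
    have h1 : C * (1 + w) ^ 2 * Q ≤ C * (2 * (1 + w ^ 2)) * (2 * (1 + P)) :=
      calc C * (1 + w) ^ 2 * Q ≤ C * (1 + w) ^ 2 * (2 * (1 + P)) :=
            mul_le_mul_of_nonneg_left hQ (by positivity)
        _ ≤ C * (2 * (1 + w ^ 2)) * (2 * (1 + P)) :=
            mul_le_mul_of_nonneg_right (mul_le_mul_of_nonneg_left hw hC) (by positivity)
    have h2 : 4 * C * (1 + P) ≤ 4 * C / s * (1 + s * P) := by
      rw [div_mul_eq_mul_div, le_div_iff₀ hs0]
      nlinarith [mul_nonneg hC hP]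
    nlinarith [sq_nonneg w]
  have hreg : η / 2 * ρ ^ 2 * (1 + s * P) ≤ η / 2 + η * P * ρ ^ 2 := by
    have : s * (P * ρ ^ 2) ≤ P * ρ ^ 2 := mul_le_of_le_one_left (by positivity) hs1
    nlinarith
  have hconst : η / 2 ≤ η / 2 * ((1 + w ^ 2) * (1 + s * P)) :=
    le_mul_of_one_le_right (by positivity)
      (one_le_mul_of_one_le_of_one_le (by nlinarith [sq_nonneg w])
        (by nlinarith [mul_nonneg hs0.le hP]))
  linarith

theorem tamed_scheme_dissipativity_general
    (n : ℕ) (dims : ℕ → ℕ)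
    (sact : ℕ → ℝ → ℝ)
    (hsdiff : ∀ i, 1 ≤ i → i ≤ n → ContDiff ℝ 1 (sact i))
    -- the known polynomial bound on the gradient of the unregularized loss
    (C : ℝ) (hC : 0 < C)
    (hgradbd : ∀ (θ : EuclideanSpace ℝ (NetIdx n dims))
        (y : EuclideanSpace ℝ (Fin (dims 0) ⊕ Fin (dims n))),
        ‖gradient (mlLoss n dims sact y) θ‖ ≤ C * (1 + ‖y‖) ^ 2 * (1 + ‖θ‖ ^ (n + 1)))
    (η : ℝ) (hη : 0 < η) (r : ℝ) (hr : ((n : ℝ) + 2) / 2 ≤ r) :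
    ∃ lam₀ > (0 : ℝ), ∀ lam : ℝ, 0 < lam → lam ≤ lam₀ → lam ≤ 1 →
      ∃ K' > (0 : ℝ),
        ∀ (θ : EuclideanSpace ℝ (NetIdx n dims))
          (y : EuclideanSpace ℝ (Fin (dims 0) ⊕ Fin (dims n))),
          ⟪tamedH n dims sact η r lam θ y, θ⟫
            ≥ (η / 2) * ‖θ‖ ^ 2 - K' * (1 + ‖y‖ ^ 2) := by
  refine ⟨1, one_pos, fun lam hlam _ hlam1 =>
    ⟨4 * C / Real.sqrt lam + η / 2, by positivity, fun θ y => ?_⟩⟩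
  have hr0 : 0 ≤ r := by linarith [n.cast_nonneg (α := ℝ)]
  have hCS : -(C * (1 + ‖y‖) ^ 2 * ((1 + ‖θ‖ ^ (n + 1)) * ‖θ‖))
      ≤ ⟪gradient (mlLoss n dims sact y) θ, θ⟫ := by
    refine le_trans ?_ (neg_le_of_abs_le (abs_real_inner_le_norm _ θ))
    rw [neg_le_neg_iff, ← mul_assoc]
    exact mul_le_mul_of_nonneg_right (hgradbd θ y) (norm_nonneg θ)
  rw [inner_tamedH_self n dims sact hsdiff η hr0, ge_iff_le]
  exact tamed_scalar_dissipativity hC.le hη (Real.sqrt_pos.2 hlam)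
    (Real.sqrt_le_one.2 hlam1) (by positivity) hCS
    (one_add_pow_succ_mul_le (norm_nonneg θ) (by linarith))
    (sq_le_one_add_rpow_mul_sq (norm_nonneg θ) (by positivity))

/-- from Lemma 6 of the paper: for the tamed scheme applied to the
n-layer network, if r ≥ (n+2)/2 then for λ ∈ (0,1] small enough the tamed updating
function satisfies the dissipativity condition
⟨H(θ,y), θ⟩ ≥ (η/2)|θ|² − K'(1 + |y|²) for some K' > 0, i.e. Assumption 1 holds with
Δ = η/2 and b(y) quadratic in y. -/
theorem tamed_scheme_dissipativity
    (n : ℕ) (hn : 1 < n) (dims : ℕ → ℕ) (hdims : ∀ i ≤ n, 0 < dims i)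
    (sact : ℕ → ℝ → ℝ) (Ms : ℝ)
    (hsdiff : ∀ i, 1 ≤ i → i ≤ n → ContDiff ℝ 1 (sact i))
    (hsbd : ∀ i, 1 ≤ i → i ≤ n → ∀ x, |sact i x| ≤ Ms)
    (hs'bd : ∀ i, 1 ≤ i → i ≤ n → ∀ x, |deriv (sact i) x| ≤ Ms)
    -- the known polynomial bound on the gradient of the unregularized loss
    (C : ℝ) (hC : 0 < C)
    (hgradbd : ∀ (θ : EuclideanSpace ℝ (NetIdx n dims))
        (y : EuclideanSpace ℝ (Fin (dims 0) ⊕ Fin (dims n))),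
        ‖gradient (mlLoss n dims sact y) θ‖ ≤ C * (1 + ‖y‖) ^ 2 * (1 + ‖θ‖ ^ (n + 1)))
    (η : ℝ) (hη : 0 < η) (r : ℝ) (hr : ((n : ℝ) + 2) / 2 ≤ r) :
    ∃ lam₀ > (0 : ℝ), ∀ lam : ℝ, 0 < lam → lam ≤ lam₀ → lam ≤ 1 →
      ∃ K' > (0 : ℝ),
        ∀ (θ : EuclideanSpace ℝ (NetIdx n dims))
          (y : EuclideanSpace ℝ (Fin (dims 0) ⊕ Fin (dims n))),
          ⟪tamedH n dims sact η r lam θ y, θ⟫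
            ≥ (η / 2) * ‖θ‖ ^ 2 - K' * (1 + ‖y‖ ^ 2) :=
  tamed_scheme_dissipativity_general n dims sact hsdiff C hC hgradbd η hη r hr
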